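/- Work in the good-parity setting, integer case. Let n₀, y₀ ∈ ℕ with n₀ ≥ 1, and let (𝔪, ε) be the signed symmetric multisegment with 𝔪 = n₀·[0,0] + Σ_{y=1}^{y₀} [−y,y] and with signs satisfying ε([−y,y])·ε([−y+1,y−1]) = −1 for all 1 ≤ y ≤ y₀ (no condition on ε([0,0])). Then AD(𝔪, ε) = (𝔪', ε'), where: (1) if y₀ = 0, then 𝔪' = 𝔪 and ε'([0,0]) = (−1)^{n₀+1}·ε([0,0]); (2) if n₀ is odd and y₀ ≠ 0, then (𝔪', ε') = (𝔪, ε); (3) if n₀ is even and y₀ ≠ 0, then 𝔪' = 𝔪 − [0,0] − [−y₀,y₀] + [−y₀,0] + [0,y₀] and ε'([−y,y]) = −ε([−y,y]) for all 0 ≤ y < y₀. -/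

import Mathlib

namespace AZ

/-- A segment in doubled coordinates: the pair `(a, b)` represents the segment
`[a/2, b/2]` whose endpoints lie in `(1/2)ℤ`.  Thus the end `e(Δ)` is `Δ.2 / 2`,
the beginning `b(Δ)` is `Δ.1 / 2`, `Δ` is centered iff `Δ.1 + Δ.2 = 0`, and
`c(Δ) = 1/2` iff `Δ.1 + Δ.2 = 2`. -/
abbrev Seg := ℤ × ℤ

namespace Seg

/-- Well-formedness of a segment: `a ≤ b` and `a ≡ b [ZMOD 2]`, i.e. `b - a ∈ 2ℕ`. -/
def WF (Δ : Seg) : Prop := Δ.1 ≤ Δ.2 ∧ Δ.1 % 2 = Δ.2 % 2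

/-- The dual (contragredient) segment `Δ∨ = [−b, −a]`. -/
def dual (Δ : Seg) : Seg := (-Δ.2, -Δ.1)

/-- `Δ⁻` : the segment with its end removed. -/
def trimEnd (Δ : Seg) : Seg := (Δ.1, Δ.2 - 2)

/-- `⁻Δ` : the segment with its beginning removed. -/
def trimBeg (Δ : Seg) : Seg := (Δ.1 + 2, Δ.2)

/-- `⁺Δ` : the segment with its beginning extended. -/
def extBeg (Δ : Seg) : Seg := (Δ.1 - 2, Δ.2)

/-- The order on segments: `[x₁,y₁] ≤ [x₂,y₂]` iff `x₁ < x₂`, or `x₁ = x₂` and `y₁ ≥ y₂`. -/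
def le (Δ₁ Δ₂ : Seg) : Prop := Δ₁.1 < Δ₂.1 ∨ (Δ₁.1 = Δ₂.1 ∧ Δ₂.2 ≤ Δ₁.2)

end Seg

/-- Labels `≤0`, `=0`, `≥0` for labeled segments. -/
inductive Label
  | le0 | eq0 | ge0
deriving DecidableEq

/-- Numerical index of a label, used to order the labels `≤0 < =0 < ≥0`. -/
def Label.idx : Label → ℕ
  | .le0 => 0
  | .eq0 => 1
  | .ge0 => 2

/-- A labeled segment: a segment together with a label. -/
abbrev LSeg := Seg × Label

namespace LSeg

/-- The order `⪯` on labeled segments: segments labeled `≤0` precede those labeled `=0`,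
which precede those labeled `≥0`; for equal labels `≥0` or `≤0` one compares the segments,
and for label `=0` one compares the ends. -/
def le (Λ₁ Λ₂ : LSeg) : Prop :=
  Λ₁.2.idx < Λ₂.2.idx ∨
    (Λ₁.2 = Λ₂.2 ∧
      if Λ₁.2 = Label.eq0 then Λ₁.1.2 ≤ Λ₂.1.2 else Seg.le Λ₁.1 Λ₂.1)

/-- The strict order `≺` on labeled segments. -/
def lt (Λ₁ Λ₂ : LSeg) : Prop := LSeg.le Λ₁ Λ₂ ∧ Λ₁ ≠ Λ₂

/-- The contragredient of a labeled segment: for a centered segment the label `≤0`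
becomes `≥0` and the labels `=0`, `≥0` are kept; for a non-centered segment the
label is flipped. -/
def dual (Λ : LSeg) : LSeg :=
  (Seg.dual Λ.1,
    if Λ.1.1 + Λ.1.2 = 0 then (if Λ.2 = Label.le0 then Label.ge0 else Λ.2)
    else
      match Λ.2 with
      | Label.le0 => Label.ge0
      | Label.eq0 => Label.eq0
      | Label.ge0 => Label.le0)

end LSeg

/-- The forced label of a non-centered segment. -/
def forcedLabel (Δ : Seg) : Label := if 0 < Δ.1 + Δ.2 then Label.ge0 else Label.le0

/-- The labeling `s(𝔪)` of a multisegment: each non-centered segment gets its forced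
label; a centered segment of multiplicity `m` contributes `⌊m/2⌋` copies labeled `≤0`,
`⌊m/2⌋` copies labeled `≥0`, and `m − 2⌊m/2⌋` copies labeled `=0`. -/
def smap (m : Multiset Seg) : Multiset LSeg :=
  (m.filter fun Δ => ¬ Δ.1 + Δ.2 = 0).map (fun Δ => (Δ, forcedLabel Δ)) +
    (m.toFinset.filter fun Δ => Δ.1 + Δ.2 = 0).val.bind (fun Δ =>
      Multiset.replicate (m.count Δ / 2) (Δ, Label.le0) +
        Multiset.replicate (m.count Δ / 2) (Δ, Label.ge0) +
        Multiset.replicate (m.count Δ % 2) (Δ, Label.eq0))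

/-- A labeled segment is special (the initial sequence stops there): `[0,0]` labeled
`≥0` or `=0` in the integer case; `[1/2,1/2]`, or `[−1/2,1/2]` labeled `≥0` or `=0`
with `ε([−1/2,1/2]) = −1`, in the half-integer case. -/
def Special (ε : Seg → ℤ) (Λ : LSeg) : Prop :=
  (Λ.1 = ((0 : ℤ), (0 : ℤ)) ∧ (Λ.2 = Label.ge0 ∨ Λ.2 = Label.eq0)) ∨
    Λ.1 = ((1 : ℤ), (1 : ℤ)) ∨
      (Λ.1 = ((-1 : ℤ), (1 : ℤ)) ∧ (Λ.2 = Label.ge0 ∨ Λ.2 = Label.eq0) ∧ ε (-1, 1) = -1)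

instance (ε : Seg → ℤ) (Λ : LSeg) : Decidable (Special ε Λ) := by
  unfold Special; infer_instance

/-- The condition for `next` to be a successor of `cur` in the initial sequence:
`next ≺ cur`, `e(next) = e(cur) − 1`, and opposite signs when both are centered. -/
def Succ (ε : Seg → ℤ) (cur next : LSeg) : Prop :=
  LSeg.lt next cur ∧ next.1.2 = cur.1.2 - 2 ∧
    (cur.1.1 + cur.1.2 = 0 → next.1.1 + next.1.2 = 0 → ε next.1 = - ε cur.1)

/-- `Δ 1, …, Δ l` is the initial sequence in the algorithm for `(m, ε)`:
`Δ 1` is the `⪯`-largest element of `s(m)` with maximal end; recursively,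
`Δ (j+1)` is the `⪯`-largest successor of `Δ j`; the sequence stops when the
current segment is special or no successor exists. -/
structure IsInitSeq (m : Multiset Seg) (ε : Seg → ℤ) (Δ : ℕ → LSeg) (l : ℕ) : Prop where
  one_le : 1 ≤ l
  mem : ∀ j, 1 ≤ j → j ≤ l → Δ j ∈ smap m
  first_max_end : ∀ Λ ∈ smap m, Λ.1.2 ≤ (Δ 1).1.2
  first_max : ∀ Λ ∈ smap m, Λ.1.2 = (Δ 1).1.2 → LSeg.le Λ (Δ 1)
  not_special : ∀ j, 1 ≤ j → j < l → ¬ Special ε (Δ j)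
  succ : ∀ j, 1 ≤ j → j < l → Succ ε (Δ j) (Δ (j + 1))
  succ_max : ∀ j, 1 ≤ j → j < l → ∀ Λ ∈ smap m, Succ ε (Δ j) Λ → LSeg.le Λ (Δ (j + 1))
  last : Special ε (Δ l) ∨ ∀ Λ ∈ smap m, ¬ Succ ε (Δ l) Λ

/-- The sign `ε₀`: `−1` if the sequence stopped at a special segment, `1` otherwise. -/
def eps0 (ε : Seg → ℤ) (Δ : ℕ → LSeg) (l : ℕ) : ℤ :=
  if Special ε (Δ l) then -1 else 1

/-- The number `n₀` of centered segments of `m`. -/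
def nCentered (m : Multiset Seg) : ℕ := (m.filter fun Δ => Δ.1 + Δ.2 = 0).card

/-- The sign `ε₁` of the centered segment `𝔪₁` in the case `ε₀ = −1`:
`(−1)^(n₀+1)·ε([0,0])` in the integer case, `(−1)^(n₀)` in the half-integer case. -/
def epsOne (m : Multiset Seg) (ε : Seg → ℤ) (Δ : ℕ → LSeg) : ℤ :=
  if (Δ 1).1.2 % 2 = 0 then (-1) ^ (nCentered m + 1) * ε (0, 0)
  else (-1) ^ nCentered m

/-- The signed multisegment `𝔪₁`: if `ε₀ = −1` it is the centered segment
`[−e(Δ₁), e(Δ₁)]` with sign `ε₁`; otherwise it is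
`[e(Δ_l), e(Δ₁)] + [−e(Δ₁), −e(Δ_l)]` (non-centered segments carry sign `1`). -/
def mOne (m : Multiset Seg) (ε : Seg → ℤ) (Δ : ℕ → LSeg) (l : ℕ) : Multiset (Seg × ℤ) :=
  if Special ε (Δ l) then {((-(Δ 1).1.2, (Δ 1).1.2), epsOne m ε Δ)}
  else {(((Δ l).1.2, (Δ 1).1.2), 1), ((-(Δ 1).1.2, -(Δ l).1.2), 1)}

/-- The labeled copies `Δ 1, …, Δ l` whose end gets removed. -/
def DEnd (Δ : ℕ → LSeg) (l : ℕ) : Multiset LSeg := (Finset.Icc 1 l).val.map Δ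

/-- The labeled copies (the contragredients of the `Δ j`) whose beginning gets removed. -/
def DBeg (Δ : ℕ → LSeg) (l : ℕ) : Multiset LSeg := (DEnd Δ l).map LSeg.dual

/-- The labeled copies trimmed on both sides. -/
def DBoth (Δ : ℕ → LSeg) (l : ℕ) : Multiset LSeg := DEnd Δ l ∩ DBeg Δ l

/-- The multisegment `𝔪#`: remove the ends of the `Δ j` and the beginnings of their
contragredients (one labeled copy each, both trims if the copy occurs in both lists),
keep all other copies, and discard empty segments. -/
def mHash (m : Multiset Seg) (Δ : ℕ → LSeg) (l : ℕ) : Multiset Seg :=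
  (smap m - DEnd Δ l - (DBeg Δ l - DBoth Δ l)).map Prod.fst +
    ((DBoth Δ l).map (fun Λ => ((Λ.1.1 + 2, Λ.1.2 - 2) : Seg)) +
        (DEnd Δ l - DBoth Δ l).map (fun Λ => ((Λ.1.1, Λ.1.2 - 2) : Seg)) +
        (DBeg Δ l - DBoth Δ l).map (fun Λ => ((Λ.1.1 + 2, Λ.1.2) : Seg))).filter
      fun Δ0 => Δ0.1 ≤ Δ0.2

/-- The trimmed segment `Λ_{i_j}#` obtained from `Δ j`. -/
def trimAt (Δ : ℕ → LSeg) (l : ℕ) (j : ℕ) : Seg :=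
  if Δ j ∈ DBeg Δ l then ((Δ j).1.1 + 2, (Δ j).1.2 - 2)
  else ((Δ j).1.1, (Δ j).1.2 - 2)

/-- The sign function `ε#` on (centered) segments of `𝔪#`. -/
def epsHash (m : Multiset Seg) (ε : Seg → ℤ) (Δ : ℕ → LSeg) (l : ℕ) : Seg → ℤ :=
  fun Δ0 =>
    if ∃ j ∈ Finset.Icc 1 l, ((Δ j).1.1 + (Δ j).1.2 = 0 ∧ trimAt Δ l j = Δ0) then
      eps0 ε Δ l * ε (Δ0.1 - 2, Δ0.2 + 2)
    else if ∃ j ∈ Finset.Icc 1 l,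
        ((Δ j).1.1 + (Δ j).1.2 = 2 ∧ trimAt Δ l j = Δ0 ∧ Δ0 ∉ m) then
      eps0 ε Δ l
    else if ∃ j ∈ Finset.Icc 1 l,
        ((Δ j).1.1 + (Δ j).1.2 = 2 ∧ trimAt Δ l j = Δ0 ∧ Δ0 ∈ m) then
      -(eps0 ε Δ l) * ε Δ0
    else eps0 ε Δ l * ε Δ0

/-- The good-parity duality algorithm `AD`, as a relation between the input `(m, ε)`
and the output signed multisegment: `AD(0) = 0` and
`AD(𝔪, ε) = (𝔪₁, ε₁) + AD(𝔪#, ε#)`. -/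
inductive IsAD : Multiset Seg → (Seg → ℤ) → Multiset (Seg × ℤ) → Prop
  | zero (ε : Seg → ℤ) : IsAD 0 ε 0
  | step {m : Multiset Seg} {ε : Seg → ℤ} {Δ : ℕ → LSeg} {l : ℕ} {d : Multiset (Seg × ℤ)}
      (hm : m ≠ 0) (hseq : IsInitSeq m ε Δ l)
      (hrec : IsAD (mHash m Δ l) (epsHash m ε Δ l) d) :
      IsAD m ε (mOne m ε Δ l + d)

/-- A valid signed symmetric multisegment in the good-parity setting. -/
structure GoodInput (m : Multiset Seg) (ε : Seg → ℤ) : Prop where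
  wf : ∀ Δ0 ∈ m, Seg.WF Δ0
  symm : m.map Seg.dual = m
  parity : ∀ Δ₁ ∈ m, ∀ Δ₂ ∈ m, Δ₁.2 % 2 = Δ₂.2 % 2
  sign : ∀ Δ0, ε Δ0 = 1 ∨ ε Δ0 = -1

/-!
On `𝔪 = n₀·[0,0] + Σ_{1 ≤ y ≤ y₀} [−y,y]` the labeled multisegment `s(𝔪)` consists of the rungs
`[−y,y]` labeled `=0` and of the copies of `[0,0]`, so the initial sequence is forced: it descends
through `[−y₀,y₀], …, [−1,1]` and stops at a copy of `[0,0]`, which is labeled `=0` (special,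
`ε₀ = −1`) when `n₀` is odd and `≤0` (not special, `ε₀ = 1`) when `n₀` is even. The rungs are
self-dual, so each loses both ends and `𝔪#` is again a multisegment of the same shape, one rung
shorter, with `n₀` resp. `n₀ − 1` copies of `[0,0]`; the alternation of the signs makes
`ε#([−y,y]) = −ε₀·ε([−y,y])`. For odd `n₀` every step therefore returns the top rung with its
own sign, for even `n₀` the first step returns `[−y₀,0] + [0,y₀]` and the rest is the odd case
with all signs flipped, and for `y₀ = 0` every step returns one `[0,0]` and flips the sign of the
others.
-/

open Multiset

theorem _root_.Multiset.map_tsub_of_le {α β : Type*} [DecidableEq α] [DecidableEq β]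
    (f : α → β) {s t : Multiset α} (h : t ≤ s) : (s - t).map f = s.map f - t.map f := by
  obtain ⟨u, rfl⟩ := Multiset.le_iff_exists_add.mp h
  simp only [add_tsub_cancel_left, map_add]

theorem _root_.Multiset.replicate_tsub_replicate {α : Type*} [DecidableEq α] (a : α) (n k : ℕ) :
    replicate n a - replicate k a = replicate (n - k) a := by
  ext b
  simp only [count_sub, count_replicate]
  split_ifs <;> omega

theorem Icc_one_succ_val (n : ℕ) :
    (Finset.Icc 1 (n + 1)).val = (n + 1) ::ₘ (Finset.Icc 1 n).val := by
  rw [← Finset.insert_Icc_right_eq_Icc_add_one (by omega), Finset.insert_val_of_notMem (by simp)]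

theorem map_Icc_one_succ {α : Type*} (f : ℕ → α) (n : ℕ) :
    (Finset.Icc 1 (n + 1)).val.map f = f 1 ::ₘ (Finset.Icc 1 n).val.map fun y => f (y + 1) := by
  rw [← Finset.insert_Icc_add_one_left_eq_Icc (by omega), Finset.insert_val_of_notMem (by simp),
    map_cons, ← Finset.map_add_right_Icc, Finset.map_val, map_map]
  rfl

theorem map_Icc_reflect {α : Type*} (f : ℕ → α) (n : ℕ) :
    (Finset.Icc 1 n).val.map (fun j => f (n + 1 - j)) = (Finset.Icc 1 n).val.map f := by
  induction n generalizing f with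
  | zero => rfl
  | succ n ih =>
    conv_lhs => rw [Icc_one_succ_val, map_cons, Nat.add_sub_cancel_left]
    rw [map_Icc_one_succ, ← ih fun y => f (y + 1)]
    exact congrArg _ (map_congr rfl fun j hj => congrArg f (by simp at hj; omega))

theorem map_fst_smap (m : Multiset Seg) : (smap m).map Prod.fst = m := by
  have hcentered : ((m.toFinset.filter fun Δ => Δ.1 + Δ.2 = 0).val.bind fun Δ =>
      replicate (m.count Δ) Δ) = m.filter fun Δ => Δ.1 + Δ.2 = 0 := by
    ext a
    rw [count_bind, count_filter, ← Finset.sum_eq_multiset_sum]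
    simp only [count_replicate, Finset.sum_ite_eq', Finset.mem_filter, mem_toFinset]
    by_cases ha : a ∈ m <;> simp [ha, count_eq_zero_of_notMem]
  simp only [smap, map_add, map_map, Function.comp_def, map_id', map_bind, map_replicate,
    ← replicate_add, ← two_mul, Nat.div_add_mod, hcentered]
  exact add_comm _ _ |>.trans (filter_add_not _ m)

theorem map_fst_smap_tsub {m : Multiset Seg} {D : Multiset LSeg} (h : D ≤ smap m) :
    (smap m - D).map Prod.fst = m - D.map Prod.fst := by
  rw [Multiset.map_tsub_of_le _ h, map_fst_smap]

namespace IsInitSeq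

variable {m : Multiset Seg} {ε : Seg → ℤ} {Δ : ℕ → LSeg} {l : ℕ}

theorem end_add_two_mul (hseq : IsInitSeq m ε Δ l) {j : ℕ} (hj : 1 ≤ j) (hjl : j ≤ l) :
    (Δ j).1.2 + 2 * j = (Δ 1).1.2 + 2 := by
  induction j, hj using Nat.le_induction with
  | base => ring
  | succ j hj ih =>
    have := (hseq.succ j hj (by omega)).2.1
    push_cast
    linarith [ih (by omega)]

theorem dEnd_nodup (hseq : IsInitSeq m ε Δ l) : (DEnd Δ l).Nodup := by
  refine (Finset.Icc 1 l).nodup.map_on fun i hi j hj hij => ?_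
  simp only [Finset.mem_val, Finset.mem_Icc] at hi hj
  have := congrArg (fun Λ : LSeg => Λ.1.2) hij
  have := hseq.end_add_two_mul hi.1 hi.2
  have := hseq.end_add_two_mul hj.1 hj.2
  omega

theorem dEnd_subset_smap (hseq : IsInitSeq m ε Δ l) : DEnd Δ l ⊆ smap m := by
  intro Λ hΛ
  obtain ⟨j, hj, rfl⟩ := mem_map.mp hΛ
  simp only [Finset.mem_val, Finset.mem_Icc] at hj
  exact hseq.mem j hj.1 hj.2

theorem l_eq_of_special (hseq : IsInitSeq m ε Δ l) {j : ℕ} (hj : 1 ≤ j) (hjl : j ≤ l)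
    (hsp : Special ε (Δ j)) : l = j := by
  by_contra h
  exact hseq.not_special j hj (by omega) hsp

theorem mHash_of_dBeg_eq (hseq : IsInitSeq m ε Δ l) (h : DBeg Δ l = DEnd Δ l) :
    mHash m Δ l = m - (DEnd Δ l).map Prod.fst +
      ((DEnd Δ l).map fun Λ => ((Λ.1.1 + 2, Λ.1.2 - 2) : Seg)).filter fun Δ0 => Δ0.1 ≤ Δ0.2 := by
  have hle : DEnd Δ l ≤ smap m := (le_iff_subset hseq.dEnd_nodup).mpr hseq.dEnd_subset_smap
  simp only [mHash, DBoth, h, ← inf_eq_inter, inf_idem, tsub_self, tsub_zero,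
    Multiset.map_zero, add_zero, map_fst_smap_tsub hle]

end IsInitSeq

section Step

variable {m : Multiset Seg} {ε : Seg → ℤ} {Δ : ℕ → LSeg} {l : ℕ}

theorem epsHash_of_trimAt_eq {j : ℕ} (hj : j ∈ Finset.Icc 1 l)
    (hc : (Δ j).1.1 + (Δ j).1.2 = 0) {Δ0 : Seg} (ht : trimAt Δ l j = Δ0) :
    epsHash m ε Δ l Δ0 = eps0 ε Δ l * ε (Δ0.1 - 2, Δ0.2 + 2) :=
  if_pos ⟨j, hj, hc, ht⟩

theorem epsHash_of_trimAt_ne {Δ0 : Seg} (h : ∀ j ∈ Finset.Icc 1 l, trimAt Δ l j ≠ Δ0) :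
    epsHash m ε Δ l Δ0 = eps0 ε Δ l * ε Δ0 := by
  unfold epsHash
  rw [if_neg, if_neg, if_neg]
  · rintro ⟨j, hj, -, ht, -⟩; exact h j hj ht
  · rintro ⟨j, hj, -, ht, -⟩; exact h j hj ht
  · rintro ⟨j, hj, -, ht⟩; exact h j hj ht

theorem IsAD.eq_zero {d : Multiset (Seg × ℤ)} (h : IsAD 0 ε d) : d = 0 := by
  cases h with
  | zero => rfl
  | step hm => exact absurd rfl hm

theorem IsAD.exists_step {d : Multiset (Seg × ℤ)} (h : IsAD m ε d) (hm : m ≠ 0) :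
    ∃ (Δ : ℕ → LSeg) (l : ℕ) (d' : Multiset (Seg × ℤ)), IsInitSeq m ε Δ l ∧
      IsAD (mHash m Δ l) (epsHash m ε Δ l) d' ∧ d = mOne m ε Δ l + d' := by
  cases h with
  | zero => exact absurd rfl hm
  | step _ hseq hrec => exact ⟨_, _, _, hseq, hrec, rfl⟩

end Step

abbrev cseg (y : ℕ) : Seg := (-(2 * (y : ℤ)), 2 * (y : ℤ))

def tower (n₀ y₀ : ℕ) : Multiset Seg :=
  replicate n₀ (cseg 0) + (Finset.Icc 1 y₀).val.map cseg

def rungs (y₀ : ℕ) : Multiset LSeg := (Finset.Icc 1 y₀).val.map fun y => (cseg y, .eq0)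

def labeledTower (n₀ y₀ : ℕ) : Multiset LSeg :=
  replicate (n₀ / 2) (cseg 0, .le0) + replicate (n₀ / 2) (cseg 0, .ge0) +
    replicate (n₀ % 2) (cseg 0, .eq0) + rungs y₀

def Alternating (ε : Seg → ℤ) (y₀ : ℕ) : Prop :=
  ∀ y ≤ y₀, ε (cseg y) = (-1) ^ y * ε (cseg 0)

section Tower

variable {n₀ y₀ : ℕ}

theorem cseg_injective : Function.Injective cseg := fun a b h => by
  simp only [Prod.mk.injEq] at h
  omega

theorem cseg_centered (y : ℕ) : (cseg y).1 + (cseg y).2 = 0 := by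
  simp

theorem special_cseg_iff {ε : Seg → ℤ} {y : ℕ} {L : Label} :
    Special ε (cseg y, L) ↔ y = 0 ∧ L ≠ .le0 := by
  cases L <;> simp [Special] <;> omega

theorem dual_cseg (y : ℕ) (L : Label) :
    LSeg.dual (cseg y, L) = (cseg y, if L = .le0 then .ge0 else L) := by
  simp [LSeg.dual, Seg.dual]

theorem mem_tower {Δ0 : Seg} :
    Δ0 ∈ tower n₀ y₀ ↔ (Δ0 = cseg 0 ∧ n₀ ≠ 0) ∨ ∃ y ∈ Finset.Icc 1 y₀, cseg y = Δ0 := by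
  simp only [tower, mem_add, mem_replicate, mem_map, Finset.mem_val]
  tauto

theorem centered_of_mem_tower {Δ0 : Seg} (h : Δ0 ∈ tower n₀ y₀) : Δ0.1 + Δ0.2 = 0 := by
  obtain ⟨rfl, -⟩ | ⟨y, -, rfl⟩ := mem_tower.mp h <;> exact cseg_centered _

theorem count_tower_zero (n₀ y₀ : ℕ) : (tower n₀ y₀).count (cseg 0) = n₀ := by
  simp [tower]

theorem count_tower_cseg (n₀ : ℕ) {y : ℕ} (hy : y ∈ Finset.Icc 1 y₀) :
    (tower n₀ y₀).count (cseg y) = 1 := by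
  have hy0 : y ≠ 0 := by simp at hy; omega
  rw [tower, count_add, count_replicate, if_neg (cseg_injective.ne hy0.symm),
    count_map_eq_count' _ _ cseg_injective, count_eq_one_of_mem (Finset.nodup _) hy]

theorem tower_ne_zero (hn : n₀ ≠ 0) (y₀ : ℕ) : tower n₀ y₀ ≠ 0 := fun h =>
  hn (by rw [← count_tower_zero n₀ y₀, h, count_zero])

theorem tower_zero_right (n₀ : ℕ) : tower n₀ 0 = replicate n₀ (cseg 0) := by
  simp [tower]

theorem tower_tsub (n₀ y₀ k : ℕ) :
    tower n₀ y₀ - (replicate k (cseg 0) + (Finset.Icc 1 y₀).val.map cseg) =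
      replicate (n₀ - k) (cseg 0) := by
  rw [tower, add_tsub_add_eq_tsub_right, replicate_tsub_replicate]

theorem replicate_add_tower_one (k y₀ : ℕ) :
    replicate k (cseg 0) + tower 1 y₀ = tower (k + 1) y₀ := by
  rw [tower, tower, ← add_assoc, ← replicate_add]

theorem nCentered_tower (n₀ y₀ : ℕ) : nCentered (tower n₀ y₀) = n₀ + y₀ := by
  rw [nCentered, filter_eq_self.mpr fun _ => centered_of_mem_tower]
  simp [tower]

theorem smap_tower (hn : n₀ ≠ 0) (y₀ : ℕ) : smap (tower n₀ y₀) = labeledTower n₀ y₀ := by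
  have hsupp : (tower n₀ y₀).toFinset = insert (cseg 0) ((Finset.Icc 1 y₀).image cseg) := by
    ext Δ0
    simp [mem_tower, hn, eq_comm]
  have hnot : cseg 0 ∉ (Finset.Icc 1 y₀).image cseg := by simp
  rw [smap, filter_eq_nil.mpr fun _ h => not_not.mpr (centered_of_mem_tower h),
    Finset.filter_true_of_mem fun _ h => centered_of_mem_tower (mem_toFinset.mp h), hsupp,
    Finset.insert_val_of_notMem hnot, Finset.image_val_of_injOn cseg_injective.injOn,
    cons_bind, bind_map, count_tower_zero, Multiset.map_zero, zero_add, labeledTower, rungs,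
    ← bind_singleton]
  refine congrArg _ (Multiset.bind_congr fun y hy => ?_)
  rw [count_tower_cseg n₀ hy]
  rfl

theorem mem_labeledTower {Λ : LSeg} :
    Λ ∈ labeledTower n₀ y₀ ↔
      ((Λ = (cseg 0, .le0) ∨ Λ = (cseg 0, .ge0)) ∧ 2 ≤ n₀) ∨
        (Λ = (cseg 0, .eq0) ∧ Odd n₀) ∨ ∃ y ∈ Finset.Icc 1 y₀, Λ = (cseg y, .eq0) := by
  simp only [labeledTower, rungs, mem_add, mem_replicate, mem_map, Finset.mem_val, Nat.odd_iff]
  constructor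
  · rintro (((⟨h, rfl⟩ | ⟨h, rfl⟩) | ⟨h, rfl⟩) | ⟨y, hy, rfl⟩)
    exacts [.inl ⟨.inl rfl, by omega⟩, .inl ⟨.inr rfl, by omega⟩, .inr (.inl ⟨rfl, by omega⟩),
      .inr (.inr ⟨y, hy, rfl⟩)]
  · rintro (⟨rfl | rfl, h⟩ | ⟨rfl, h⟩ | ⟨y, hy, rfl⟩)
    exacts [.inl (.inl (.inl ⟨by omega, rfl⟩)), .inl (.inl (.inr ⟨by omega, rfl⟩)),
      .inl (.inr ⟨by omega, rfl⟩), .inr ⟨y, hy, rfl⟩]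

theorem fst_eq_or_eq_of_mem_labeledTower {Λ : LSeg} (h : Λ ∈ labeledTower n₀ y₀) :
    Λ.1 = cseg 0 ∨ ∃ y ∈ Finset.Icc 1 y₀, Λ = (cseg y, .eq0) := by
  rcases mem_labeledTower.mp h with ⟨rfl | rfl, -⟩ | ⟨rfl, -⟩ | h
  exacts [.inl rfl, .inl rfl, .inl rfl, .inr h]

theorem end_nonneg_of_mem_labeledTower {Λ : LSeg} (h : Λ ∈ labeledTower n₀ y₀) :
    0 ≤ Λ.1.2 := by
  rcases fst_eq_or_eq_of_mem_labeledTower h with h | ⟨y, -, rfl⟩ <;> simp [h]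

theorem map_dual_rungs (y₀ : ℕ) : (rungs y₀).map LSeg.dual = rungs y₀ := by
  simp only [rungs, map_map, Function.comp_def, dual_cseg, reduceCtorEq, if_false]

theorem map_fst_rungs (y₀ : ℕ) : (rungs y₀).map Prod.fst = (Finset.Icc 1 y₀).val.map cseg := by
  simp only [rungs, map_map, Function.comp_def]

theorem filter_trimBoth_rungs (y₀ : ℕ) :
    ((rungs (y₀ + 1)).map fun Λ => ((Λ.1.1 + 2, Λ.1.2 - 2) : Seg)).filter
      (fun Δ0 => Δ0.1 ≤ Δ0.2) = tower 1 y₀ := by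
  have htrim : (rungs (y₀ + 1)).map (fun Λ => ((Λ.1.1 + 2, Λ.1.2 - 2) : Seg)) =
      (Finset.Icc 1 (y₀ + 1)).val.map fun y => cseg (y - 1) := by
    refine (map_map _ _ _).trans (map_congr rfl fun y hy => ?_)
    simp only [Finset.mem_val, Finset.mem_Icc] at hy
    simp only [Function.comp_apply, Prod.mk.injEq]
    omega
  rw [htrim, filter_eq_self.mpr, map_Icc_one_succ]
  · simp [tower]
  · intro Δ0 h
    obtain ⟨y, -, rfl⟩ := mem_map.mp h
    simp

end Tower

section Alternating

variable {ε ε' : Seg → ℤ} {y₀ : ℕ}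

theorem Alternating.eq_neg_succ (hε : Alternating ε y₀) {y : ℕ} (hy : y < y₀) :
    ε (cseg y) = -ε (cseg (y + 1)) := by
  rw [hε y hy.le, hε (y + 1) hy, pow_succ]
  ring

theorem Alternating.mono {y₁ : ℕ} (hε : Alternating ε y₁) (h : y₀ ≤ y₁) : Alternating ε y₀ :=
  fun y hy => hε y (hy.trans h)

theorem Alternating.of_eq_mul (hε : Alternating ε y₀) (s : ℤ)
    (h : ∀ y ≤ y₀, ε' (cseg y) = s * ε (cseg y)) : Alternating ε' y₀ := by
  intro y hy
  rw [h y hy, h 0 (Nat.zero_le _), hε y hy]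
  ring

theorem alternating_of_mul_eq_neg_one
    (h : ∀ y : ℕ, 1 ≤ y → y ≤ y₀ →
      ε (cseg y) * ε (-(2 * ((y : ℤ) - 1)), 2 * ((y : ℤ) - 1)) = -1) :
    Alternating ε y₀ := by
  intro y hy
  induction y with
  | zero => simp
  | succ y ih =>
    have hmul := h (y + 1) (by omega) hy
    push_cast at hmul
    simp only [add_sub_cancel_right] at hmul
    rw [pow_succ, mul_neg_one, neg_mul, ← ih (by omega)]
    rcases Int.eq_one_or_neg_one_of_mul_eq_neg_one' hmul with ⟨h1, h2⟩ | ⟨h1, h2⟩ <;>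
      simp only [cseg] at h1 h2 ⊢ <;> omega

end Alternating

theorem exists_succ_cseg {n₀ y₀ : ℕ} (hn : n₀ ≠ 0) {ε : Seg → ℤ} (hε : Alternating ε y₀)
    {c : ℕ} (hc : c ∈ Finset.Icc 1 y₀) : ∃ Λ ∈ labeledTower n₀ y₀, Succ ε (cseg c, .eq0) Λ := by
  simp only [Finset.mem_Icc] at hc
  obtain ⟨c, rfl⟩ : ∃ c', c = c' + 1 := ⟨c - 1, by omega⟩
  have hsign := hε.eq_neg_succ (y := c) (by omega)
  rcases Nat.eq_zero_or_pos c with rfl | hc0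
  · refine ⟨(cseg 0, if Odd n₀ then .eq0 else .le0), ?_, ?_, by simp, fun _ _ => hsign⟩
    · rw [mem_labeledTower]
      split_ifs with hodd
      · exact .inr (.inl ⟨rfl, hodd⟩)
      · obtain ⟨k, hk⟩ := Nat.not_odd_iff_even.mp hodd
        exact .inl ⟨.inl rfl, by omega⟩
    · split_ifs <;> simp [LSeg.lt, LSeg.le, Label.idx]
  · refine ⟨(cseg c, .eq0), mem_labeledTower.mpr (.inr (.inr ⟨c, ?_, rfl⟩)), ?_, ?_,
      fun _ _ => hsign⟩
    · simp only [Finset.mem_Icc]; omega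
    · simp [LSeg.lt, LSeg.le]
    · push_cast; ring

namespace IsInitSeq

variable {n₀ y₀ : ℕ} {ε : Seg → ℤ} {Δ : ℕ → LSeg} {l : ℕ}

theorem tower_zero (hn : n₀ ≠ 0) (hseq : IsInitSeq (tower n₀ 0) ε Δ l) :
    l = 1 ∧ ∃ L ≠ Label.le0, Δ 1 = (cseg 0, L) := by
  have hmem := hseq.mem 1 le_rfl hseq.one_le
  rw [smap_tower hn] at hmem
  obtain ⟨L, hΔ⟩ : ∃ L, Δ 1 = (cseg 0, L) := by
    rcases fst_eq_or_eq_of_mem_labeledTower hmem with h | ⟨y, hy, -⟩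
    · exact ⟨_, Prod.ext h rfl⟩
    · simp at hy
  have hL : L ≠ .le0 := by
    rintro rfl
    have hge : ((cseg 0, .ge0) : LSeg) ∈ smap (tower n₀ 0) := by
      rw [hΔ] at hmem
      rw [smap_tower hn, mem_labeledTower]
      exact .inl ⟨.inr rfl, by simpa [mem_labeledTower] using hmem⟩
    simpa [hΔ, LSeg.le, Label.idx] using hseq.first_max _ hge (by rw [hΔ])
  refine ⟨hseq.l_eq_of_special le_rfl hseq.one_le ?_, L, hL, hΔ⟩
  rw [hΔ, special_cseg_iff]
  exact ⟨rfl, hL⟩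

theorem mem_labeledTower_succ (hn : n₀ ≠ 0) (hseq : IsInitSeq (tower n₀ (y₀ + 1)) ε Δ l)
    {j : ℕ} (hj : 1 ≤ j) (hjl : j ≤ l) : Δ j ∈ labeledTower n₀ (y₀ + 1) := by
  rw [← smap_tower hn]
  exact hseq.mem j hj hjl

theorem tower_succ_end (hn : n₀ ≠ 0) (hseq : IsInitSeq (tower n₀ (y₀ + 1)) ε Δ l)
    {j : ℕ} (hj : 1 ≤ j) (hjl : j ≤ l) : (Δ j).1.2 + 2 * j = 2 * (y₀ + 2 : ℕ) := by
  have htop : ((cseg (y₀ + 1), .eq0) : LSeg) ∈ smap (tower n₀ (y₀ + 1)) := by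
    rw [smap_tower hn]
    exact mem_labeledTower.mpr (.inr (.inr ⟨y₀ + 1, by simp, rfl⟩))
  have hge := hseq.first_max_end _ htop
  have := hseq.end_add_two_mul hj hjl
  rcases fst_eq_or_eq_of_mem_labeledTower
      (hseq.mem_labeledTower_succ hn le_rfl hseq.one_le) with h | ⟨y, hy, h⟩
  · rw [h] at hge; simp at hge; omega
  · rw [h] at hge this; simp at hy hge this; push_cast; omega

theorem tower_succ_eq_of_le (hn : n₀ ≠ 0) (hseq : IsInitSeq (tower n₀ (y₀ + 1)) ε Δ l)
    {j : ℕ} (hj : 1 ≤ j) (hjl : j ≤ l) (hjy : j ≤ y₀ + 1) : Δ j = (cseg (y₀ + 2 - j), .eq0) := by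
  have hend := hseq.tower_succ_end hn hj hjl
  rcases fst_eq_or_eq_of_mem_labeledTower (hseq.mem_labeledTower_succ hn hj hjl) with
    h | ⟨y, -, h⟩
  · rw [h] at hend; simp at hend; omega
  · rw [h] at hend ⊢
    simp only [Prod.mk.injEq, and_true]
    simp at hend
    omega

theorem tower_succ_prefix (hn : n₀ ≠ 0) (hε : Alternating ε (y₀ + 1))
    (hseq : IsInitSeq (tower n₀ (y₀ + 1)) ε Δ l) :
    l = y₀ + 2 ∧ ∀ j ∈ Finset.Icc 1 (y₀ + 1), Δ j = (cseg (y₀ + 2 - j), .eq0) := by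
  have hl : l ≤ y₀ + 2 := by
    have := hseq.tower_succ_end hn hseq.one_le le_rfl
    have := end_nonneg_of_mem_labeledTower (hseq.mem_labeledTower_succ hn hseq.one_le le_rfl)
    omega
  have hl' : y₀ + 2 ≤ l := by
    by_contra! hlt
    have hΔl := hseq.tower_succ_eq_of_le hn hseq.one_le le_rfl (by omega)
    rcases hseq.last with hsp | hnone
    · rw [hΔl, special_cseg_iff] at hsp
      omega
    · obtain ⟨Λ, hΛ, hsucc⟩ := exists_succ_cseg hn hε (c := y₀ + 2 - l)
        (by simp; have := hseq.one_le; omega)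
      exact hnone Λ (by rwa [smap_tower hn]) (hΔl ▸ hsucc)
  refine ⟨by omega, fun j hj => ?_⟩
  simp only [Finset.mem_Icc] at hj
  exact hseq.tower_succ_eq_of_le hn hj.1 (by omega) hj.2

theorem tower_succ_last (hn : n₀ ≠ 0) (hε : Alternating ε (y₀ + 1))
    (hseq : IsInitSeq (tower n₀ (y₀ + 1)) ε Δ l) :
    Δ (y₀ + 2) = (cseg 0, if Odd n₀ then .eq0 else .le0) := by
  obtain ⟨rfl, hprefix⟩ := hseq.tower_succ_prefix hn hε
  have hprev : Δ (y₀ + 1) = (cseg 1, .eq0) := by simpa using hprefix (y₀ + 1) (by simp)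
  obtain ⟨hlt, hend, -⟩ := hseq.succ (y₀ + 1) (by omega) (by omega)
  have hmem := hseq.mem_labeledTower_succ hn (by omega) le_rfl
  rw [hprev] at hlt hend
  obtain ⟨L, hΔ⟩ : ∃ L, Δ (y₀ + 2) = (cseg 0, L) := by
    rcases fst_eq_or_eq_of_mem_labeledTower hmem with h | ⟨y, hy, h⟩
    · exact ⟨_, Prod.ext h rfl⟩
    · rw [h] at hend; simp at hy hend; omega
  rw [hΔ] at hlt hmem ⊢
  have hL : L ≠ .ge0 := by rintro rfl; simp [LSeg.lt, LSeg.le, Label.idx] at hlt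
  split_ifs with hodd
  · have hsucc : Succ ε (cseg 1, .eq0) (cseg 0, .eq0) :=
      ⟨by simp [LSeg.lt, LSeg.le], by simp, fun _ _ => hε.eq_neg_succ (y := 0) (by omega)⟩
    have hle := hseq.succ_max (y₀ + 1) (by omega) (by omega) (cseg 0, .eq0)
      (by rw [smap_tower hn]; exact mem_labeledTower.mpr (.inr (.inl ⟨rfl, hodd⟩)))
      (hprev ▸ hsucc)
    rw [hΔ] at hle
    cases L <;> simp_all [LSeg.le, Label.idx]
  · cases L
    · rfl
    · simp [mem_labeledTower] at hmem
      exact absurd hmem hodd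
    · exact absurd rfl hL

end IsInitSeq

section TowerStep

variable {n₀ y₀ : ℕ} {ε : Seg → ℤ} {Δ : ℕ → LSeg}

theorem dEnd_eq_of_prefix {L : Label}
    (hprefix : ∀ j ∈ Finset.Icc 1 (y₀ + 1), Δ j = (cseg (y₀ + 2 - j), .eq0))
    (hlast : Δ (y₀ + 2) = (cseg 0, L)) :
    DEnd Δ (y₀ + 2) = (cseg 0, L) ::ₘ rungs (y₀ + 1) := by
  rw [DEnd, Icc_one_succ_val, map_cons, hlast, map_congr rfl fun j hj => hprefix j hj, rungs]
  exact congrArg _ (map_Icc_reflect (fun y => (cseg y, Label.eq0)) (y₀ + 1))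

theorem mHash_tower_zero {l : ℕ} (hseq : IsInitSeq (tower n₀ 0) ε Δ l)
    (hl : l = 1) {L : Label} (hL : L ≠ .le0) (hΔ : Δ 1 = (cseg 0, L)) :
    mHash (tower n₀ 0) Δ l = tower (n₀ - 1) 0 := by
  subst hl
  have hD : DEnd Δ 1 = {(cseg 0, L)} := by
    rw [DEnd, Finset.Icc_self, Finset.singleton_val, map_singleton, hΔ]
  have hB : DBeg Δ 1 = DEnd Δ 1 := by
    rw [DBeg, hD, map_singleton, dual_cseg, if_neg hL]
  rw [hseq.mHash_of_dBeg_eq hB, hD, map_singleton, map_singleton, filter_singleton,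
    if_neg (by simp), empty_eq_zero, add_zero, tower_zero_right, tower_zero_right,
    ← replicate_one, replicate_tsub_replicate]

theorem mHash_tower_succ_of_eq0 (hn : n₀ ≠ 0)
    (hseq : IsInitSeq (tower n₀ (y₀ + 1)) ε Δ (y₀ + 2))
    (hD : DEnd Δ (y₀ + 2) = (cseg 0, .eq0) ::ₘ rungs (y₀ + 1)) :
    mHash (tower n₀ (y₀ + 1)) Δ (y₀ + 2) = tower n₀ y₀ := by
  have hB : DBeg Δ (y₀ + 2) = DEnd Δ (y₀ + 2) := by
    rw [DBeg, hD, map_cons, dual_cseg, map_dual_rungs, if_neg (by simp)]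
  rw [hseq.mHash_of_dBeg_eq hB, hD, map_cons, map_cons, map_fst_rungs,
    filter_cons_of_neg _ (by simp), filter_trimBoth_rungs, ← singleton_add, ← replicate_one,
    tower_tsub, replicate_add_tower_one, Nat.sub_add_cancel (by omega)]

theorem mHash_tower_succ_of_le0 (hn : 2 ≤ n₀)
    (hseq : IsInitSeq (tower n₀ (y₀ + 1)) ε Δ (y₀ + 2))
    (hD : DEnd Δ (y₀ + 2) = (cseg 0, .le0) ::ₘ rungs (y₀ + 1)) :
    mHash (tower n₀ (y₀ + 1)) Δ (y₀ + 2) = tower (n₀ - 1) y₀ := by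
  have hB : DBeg Δ (y₀ + 2) = (cseg 0, .ge0) ::ₘ rungs (y₀ + 1) := by
    rw [DBeg, hD, map_cons, dual_cseg, map_dual_rungs, if_pos rfl]
  have hBoth : DBoth Δ (y₀ + 2) = rungs (y₀ + 1) := by
    rw [DBoth, hD, hB, cons_inter_of_neg _ (by simp [rungs]), ← inf_eq_inter,
      inf_of_le_left (le_cons_self _ _)]
  have hEsub : DEnd Δ (y₀ + 2) - DBoth Δ (y₀ + 2) = {(cseg 0, .le0)} := by
    rw [hD, hBoth, ← singleton_add, add_tsub_cancel_right]
  have hBsub : DBeg Δ (y₀ + 2) - DBoth Δ (y₀ + 2) = {(cseg 0, .ge0)} := by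
    rw [hB, hBoth, ← singleton_add, add_tsub_cancel_right]
  have hle : DEnd Δ (y₀ + 2) + {(cseg 0, .ge0)} ≤ smap (tower n₀ (y₀ + 1)) := by
    rw [add_comm, singleton_add]
    refine (le_iff_subset (Nodup.cons ?_ hseq.dEnd_nodup)).mpr
      (cons_subset.mpr ⟨?_, hseq.dEnd_subset_smap⟩)
    · simp [hD, rungs]
    · rw [smap_tower (by omega), mem_labeledTower]
      exact .inl ⟨.inr rfl, hn⟩
  have hfst : ((cseg 0, Label.le0) ::ₘ rungs (y₀ + 1) + {(cseg 0, .ge0)}).map Prod.fst =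
      replicate 2 (cseg 0) + (Finset.Icc 1 (y₀ + 1)).val.map cseg := by
    rw [map_add, map_cons, map_fst_rungs, map_singleton, add_comm, singleton_add]
    rfl
  rw [mHash, hEsub, hBsub, hBoth, tsub_tsub, map_fst_smap_tsub hle, filter_add, filter_add,
    filter_trimBoth_rungs, hD, hfst, tower_tsub, map_singleton, map_singleton, filter_singleton,
    filter_singleton, if_neg (by simp), if_neg (by simp), empty_eq_zero, add_zero, add_zero,
    replicate_add_tower_one]
  congr 1
  omega

theorem mOne_of_special {m : Multiset Seg} {l : ℕ} (hsp : Special ε (Δ l)) {y : ℕ} {L : Label}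
    (h1 : Δ 1 = (cseg y, L)) :
    mOne m ε Δ l = {(cseg y, (-1) ^ (nCentered m + 1) * ε (cseg 0))} := by
  rw [mOne, if_pos hsp, epsOne, h1, if_pos (by simp)]
  rfl

theorem epsHash_cseg_of_prefix {m : Multiset Seg}
    (hprefix : ∀ j ∈ Finset.Icc 1 (y₀ + 1), Δ j = (cseg (y₀ + 2 - j), .eq0)) {y : ℕ}
    (hy : y ≤ y₀) : epsHash m ε Δ (y₀ + 2) (cseg y) = eps0 ε Δ (y₀ + 2) * ε (cseg (y + 1)) := by
  have hj : y₀ + 1 - y ∈ Finset.Icc 1 (y₀ + 2) := by simp; omega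
  have hΔj : Δ (y₀ + 1 - y) = (cseg (y + 1), .eq0) := by
    rw [hprefix _ (by simp; omega)]
    congr 2
    omega
  have hdual : Δ (y₀ + 1 - y) ∈ DBeg Δ (y₀ + 2) :=
    mem_map.mpr ⟨_, mem_map.mpr ⟨_, hj, rfl⟩, by rw [hΔj, dual_cseg, if_neg (by simp)]⟩
  have htrim : trimAt Δ (y₀ + 2) (y₀ + 1 - y) = cseg y := by
    rw [trimAt, if_pos hdual, hΔj]
    simp only [Prod.mk.injEq]
    push_cast
    constructor <;> ring
  rw [epsHash_of_trimAt_eq hj (by rw [hΔj]; exact cseg_centered _) htrim]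
  congr 2
  simp only [Prod.mk.injEq]
  push_cast
  constructor <;> ring

end TowerStep

section TowerAD

variable {ε : Seg → ℤ} {d : Multiset (Seg × ℤ)} {n₀ y₀ : ℕ}

theorem IsAD.tower_zero (h : IsAD (tower n₀ 0) ε d) :
    d = replicate n₀ (cseg 0, (-1) ^ (n₀ + 1) * ε (cseg 0)) := by
  induction n₀ generalizing ε d with
  | zero => simpa using h.eq_zero
  | succ n ih =>
    obtain ⟨Δ, l, d', hseq, hrec, rfl⟩ := h.exists_step (tower_ne_zero n.succ_ne_zero 0)
    obtain ⟨hl, L, hL, hΔ⟩ := hseq.tower_zero n.succ_ne_zero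
    have hsp : Special ε (Δ l) := by rw [hl, hΔ, special_cseg_iff]; exact ⟨rfl, hL⟩
    have hflip : epsHash (tower (n + 1) 0) ε Δ l (cseg 0) = -ε (cseg 0) := by
      subst hl
      rw [epsHash_of_trimAt_ne, eps0, if_pos hsp, neg_one_mul]
      intro j hj
      obtain rfl : j = 1 := by simpa using hj
      unfold trimAt
      split_ifs <;> simp [hΔ]
    rw [mHash_tower_zero hseq hl hL hΔ, Nat.add_sub_cancel] at hrec
    rw [mOne_of_special hsp hΔ, nCentered_tower, ih hrec, hflip, replicate_succ, singleton_add,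
      add_zero, show (-1 : ℤ) ^ (n + 1) * -ε (cseg 0) = (-1) ^ (n + 1 + 1) * ε (cseg 0) by ring]

theorem IsAD.tower_succ_of_odd (hn : Odd n₀) (hε : Alternating ε (y₀ + 1))
    (h : IsAD (tower n₀ (y₀ + 1)) ε d) :
    ∃ ε' d', IsAD (tower n₀ y₀) ε' d' ∧ (∀ y ≤ y₀, ε' (cseg y) = ε (cseg y)) ∧
      d = (cseg (y₀ + 1), ε (cseg (y₀ + 1))) ::ₘ d' := by
  have hn0 : n₀ ≠ 0 := hn.pos.ne'
  obtain ⟨Δ, l, d', hseq, hrec, rfl⟩ := h.exists_step (tower_ne_zero hn0 _)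
  have hlast := hseq.tower_succ_last hn0 hε
  obtain ⟨rfl, hprefix⟩ := hseq.tower_succ_prefix hn0 hε
  rw [if_pos hn] at hlast
  have hsp : Special ε (Δ (y₀ + 2)) := by rw [hlast, special_cseg_iff]; simp
  have hΔ1 : Δ 1 = (cseg (y₀ + 1), .eq0) := by simpa using hprefix 1 (by simp)
  rw [mHash_tower_succ_of_eq0 hn0 hseq (dEnd_eq_of_prefix hprefix hlast)] at hrec
  refine ⟨_, d', hrec, fun y hy => ?_, ?_⟩
  · rw [epsHash_cseg_of_prefix hprefix hy, eps0, if_pos hsp,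
      hε.eq_neg_succ (by omega : y < y₀ + 1)]
    ring
  · rw [mOne_of_special hsp hΔ1, nCentered_tower, hε (y₀ + 1) le_rfl, singleton_add]
    obtain ⟨k, rfl⟩ := hn
    rw [show 2 * k + 1 + (y₀ + 1) + 1 = 2 * (k + 1) + (y₀ + 1) by ring, pow_add, pow_mul]
    simp

theorem IsAD.tower_succ_of_even (hn : Even n₀) (hn0 : n₀ ≠ 0) (hε : Alternating ε (y₀ + 1))
    (h : IsAD (tower n₀ (y₀ + 1)) ε d) :
    ∃ ε' d', IsAD (tower (n₀ - 1) y₀) ε' d' ∧ (∀ y ≤ y₀, ε' (cseg y) = -ε (cseg y)) ∧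
      d = {(((-(2 * ((y₀ + 1 : ℕ) : ℤ)), 0) : Seg), 1),
        (((0, 2 * ((y₀ + 1 : ℕ) : ℤ)) : Seg), 1)} + d' := by
  obtain ⟨Δ, l, d', hseq, hrec, rfl⟩ := h.exists_step (tower_ne_zero hn0 _)
  have hlast := hseq.tower_succ_last hn0 hε
  obtain ⟨rfl, hprefix⟩ := hseq.tower_succ_prefix hn0 hε
  rw [if_neg (Nat.not_odd_iff_even.mpr hn)] at hlast
  have hsp : ¬Special ε (Δ (y₀ + 2)) := by rw [hlast, special_cseg_iff]; simp
  have hΔ1 : Δ 1 = (cseg (y₀ + 1), .eq0) := by simpa using hprefix 1 (by simp)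
  rw [mHash_tower_succ_of_le0 (by obtain ⟨k, rfl⟩ := hn; omega) hseq
    (dEnd_eq_of_prefix hprefix hlast)] at hrec
  refine ⟨_, d', hrec, fun y hy => ?_, ?_⟩
  · rw [epsHash_cseg_of_prefix hprefix hy, eps0, if_neg hsp,
      hε.eq_neg_succ (by omega : y < y₀ + 1)]
    ring
  · rw [mOne, if_neg hsp, hlast, hΔ1, pair_comm]
    simp

theorem IsAD.tower_of_odd (hn : Odd n₀) (hε : Alternating ε y₀) (h : IsAD (tower n₀ y₀) ε d) :
    d = replicate n₀ (cseg 0, ε (cseg 0)) +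
      (Finset.Icc 1 y₀).val.map fun y => (cseg y, ε (cseg y)) := by
  induction y₀ generalizing ε d with
  | zero => simp [h.tower_zero, hn.add_one.neg_one_pow]
  | succ y₀ ih =>
    obtain ⟨ε', d', hrec, hε', rfl⟩ := h.tower_succ_of_odd hn hε
    rw [ih ((hε.mono y₀.le_succ).of_eq_mul 1 (by simpa using hε')) hrec, hε' 0 (Nat.zero_le _),
      map_congr rfl fun y hy => by rw [hε' y (by simp at hy; omega)], Icc_one_succ_val,
      map_cons, add_cons]

theorem IsAD.tower_of_even (hn : Even n₀) (hn0 : n₀ ≠ 0) (hε : Alternating ε (y₀ + 1))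
    (h : IsAD (tower n₀ (y₀ + 1)) ε d) :
    d = replicate (n₀ - 1) (cseg 0, -ε (cseg 0)) +
      ((Finset.Icc 1 y₀).val.map fun y => (cseg y, -ε (cseg y))) +
        {(((-(2 * ((y₀ + 1 : ℕ) : ℤ)), 0) : Seg), 1),
          (((0, 2 * ((y₀ + 1 : ℕ) : ℤ)) : Seg), 1)} := by
  obtain ⟨ε', d', hrec, hε', rfl⟩ := h.tower_succ_of_even hn hn0 hε
  have hodd : Odd (n₀ - 1) := Nat.Even.sub_odd (Nat.one_le_iff_ne_zero.mpr hn0) hn odd_one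
  rw [IsAD.tower_of_odd hodd ((hε.mono y₀.le_succ).of_eq_mul (-1) (by simpa using hε')) hrec,
    hε' 0 (Nat.zero_le _), map_congr rfl fun y hy => by rw [hε' y (by simp at hy; omega)],
    add_comm]

end TowerAD

-- In the statement, `fun y => … (y : ℤ) …` makes Lean coerce `(Finset.Icc 1 y₀).val` to a
-- `Multiset ℤ` through the monad instance of `Multiset`.
theorem bind_pure_natCast (s : Multiset ℕ) :
    (do let a ← s; pure (a : ℤ) : Multiset ℤ) = s.map (↑) :=
  bind_singleton _ _

theorem stmt15_general (n₀ y₀ : ℕ) (hn₀ : 1 ≤ n₀) (ε : Seg → ℤ)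
    (halt : ∀ y : ℕ, 1 ≤ y → y ≤ y₀ →
      ε (-(2 * (y : ℤ)), 2 * (y : ℤ)) *
        ε (-(2 * ((y : ℤ) - 1)), 2 * ((y : ℤ) - 1)) = -1)
    (d : Multiset (Seg × ℤ))
    (had : IsAD
      (Multiset.replicate n₀ (((0 : ℤ), (0 : ℤ)) : Seg) +
        (Finset.Icc 1 y₀).val.map (fun y => ((-(2 * (y : ℤ)), 2 * (y : ℤ)) : Seg)))
      ε d) :
    (y₀ = 0 →
      d = Multiset.replicate n₀
        ((((0 : ℤ), (0 : ℤ)) : Seg), (-1) ^ (n₀ + 1) * ε (0, 0))) ∧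
    (Odd n₀ → y₀ ≠ 0 →
      d = Multiset.replicate n₀ ((((0 : ℤ), (0 : ℤ)) : Seg), ε (0, 0)) +
        (Finset.Icc 1 y₀).val.map (fun y =>
          (((-(2 * (y : ℤ)), 2 * (y : ℤ)) : Seg),
            ε (-(2 * (y : ℤ)), 2 * (y : ℤ))))) ∧
    (Even n₀ → y₀ ≠ 0 →
      d = Multiset.replicate (n₀ - 1) ((((0 : ℤ), (0 : ℤ)) : Seg), -ε (0, 0)) +
        (Finset.Icc 1 (y₀ - 1)).val.map (fun y =>
          (((-(2 * (y : ℤ)), 2 * (y : ℤ)) : Seg),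
            -ε (-(2 * (y : ℤ)), 2 * (y : ℤ)))) +
        {(((-(2 * (y₀ : ℤ)), (0 : ℤ)) : Seg), 1),
          ((((0 : ℤ), 2 * (y₀ : ℤ)) : Seg), 1)}) := by
  have hε : Alternating ε y₀ := alternating_of_mul_eq_neg_one halt
  rw [bind_pure_natCast, map_map] at had
  refine ⟨fun hy => ?_, fun hodd _ => ?_, fun heven hy => ?_⟩
  · subst hy
    exact IsAD.tower_zero had
  · rw [bind_pure_natCast, map_map]
    exact IsAD.tower_of_odd hodd hε had
  · obtain ⟨k, rfl⟩ := Nat.exists_eq_succ_of_ne_zero hy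
    rw [bind_pure_natCast, map_map, Nat.succ_sub_one]
    exact IsAD.tower_of_even heven (by omega) hε had

/-- Lemma 10.1.1: explicit computation of `AD` on
`𝔪 = n₀·[0,0] + Σ_{y=1}^{y₀} [−y,y]` (integer case) with alternating signs. -/
theorem stmt15 (n₀ y₀ : ℕ) (hn₀ : 1 ≤ n₀) (ε : Seg → ℤ)
    (hsign : ∀ Δ0 : Seg, ε Δ0 = 1 ∨ ε Δ0 = -1)
    (halt : ∀ y : ℕ, 1 ≤ y → y ≤ y₀ →
      ε (-(2 * (y : ℤ)), 2 * (y : ℤ)) *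
        ε (-(2 * ((y : ℤ) - 1)), 2 * ((y : ℤ) - 1)) = -1)
    (d : Multiset (Seg × ℤ))
    (had : IsAD
      (Multiset.replicate n₀ (((0 : ℤ), (0 : ℤ)) : Seg) +
        (Finset.Icc 1 y₀).val.map (fun y => ((-(2 * (y : ℤ)), 2 * (y : ℤ)) : Seg)))
      ε d) :
    (y₀ = 0 →
      d = Multiset.replicate n₀
        ((((0 : ℤ), (0 : ℤ)) : Seg), (-1) ^ (n₀ + 1) * ε (0, 0))) ∧
    (Odd n₀ → y₀ ≠ 0 →
      d = Multiset.replicate n₀ ((((0 : ℤ), (0 : ℤ)) : Seg), ε (0, 0)) +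
        (Finset.Icc 1 y₀).val.map (fun y =>
          (((-(2 * (y : ℤ)), 2 * (y : ℤ)) : Seg),
            ε (-(2 * (y : ℤ)), 2 * (y : ℤ))))) ∧
    (Even n₀ → y₀ ≠ 0 →
      d = Multiset.replicate (n₀ - 1) ((((0 : ℤ), (0 : ℤ)) : Seg), -ε (0, 0)) +
        (Finset.Icc 1 (y₀ - 1)).val.map (fun y =>
          (((-(2 * (y : ℤ)), 2 * (y : ℤ)) : Seg),
            -ε (-(2 * (y : ℤ)), 2 * (y : ℤ)))) +
        {(((-(2 * (y₀ : ℤ)), (0 : ℤ)) : Seg), 1),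
          ((((0 : ℤ), 2 * (y₀ : ℤ)) : Seg), 1)}) :=
  stmt15_general n₀ y₀ hn₀ ε halt d had

end AZ
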